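/- arXiv:2010.15968 — 3 statements merged into one kernel-verified Lean document; each statement's English description precedes it below -/
import Mathlib

section
/- Let ρ be a density matrix on C^{D_v}⊗C^{D_h} satisfying a volume-law bound: |S(Tr_h ρ) − log D_v| ≤ c·D_v/D_h for a constant c > 0. Then for any Hermitian D_v×D_v matrix O, |Tr((O ⊗ I_{D_h})·(ρ − I/(D_v·D_h)))| ≤ ‖O‖_∞ · √(2·c·D_v/D_h). -/
/-!
With `σ = Tr_h ρ`, the expectation `Tr((O ⊗ I)(ρ - I/(D_v D_h)))` equals `Tr(O (σ - I/D_v))`.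
In an eigenbasis `(e_i)` of `σ` this is `∑ (λ_i - 1/D_v) ⟪e_i, O e_i⟫`, so it is bounded by
`‖O‖ · ∑ |λ_i - 1/D_v|`. By Pinsker's inequality the ℓ¹-distance of the spectrum `λ` from the
uniform distribution is at most `√(2 KL(λ ‖ uniform)) = √(2 (log D_v - S(σ)))`, and the volume
law bounds `log D_v - S(σ)` by `c D_v / D_h`. Pinsker's inequality itself follows from the
pointwise bound `3 (x - 1)² ≤ 2 (x + 2) (x log x + 1 - x)` and Cauchy–Schwarz.
-/

open Matrix BigOperators
open scoped ComplexOrder Kronecker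

/-- The operator norm (largest singular value) of a complex square matrix, realized as the
norm of the induced operator on Euclidean space. -/
noncomputable def opNorm {n : Type*} [Fintype n] [DecidableEq n] (A : Matrix n n ℂ) : ℝ :=
  ‖Matrix.toEuclideanCLM (𝕜 := ℂ) A‖

/-- The von Neumann entropy `∑ i, -λ i * log (λ i)` of a matrix, computed from its
eigenvalues when it is Hermitian (and `0` otherwise). -/
noncomputable def vNEntropy {n : Type*} [Fintype n] [DecidableEq n] (σ : Matrix n n ℂ) : ℝ :=
  if h : σ.IsHermitian then ∑ i, Real.negMulLog (h.eigenvalues i) else 0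

/-- Partial trace over the hidden (second) tensor factor. -/
noncomputable def trH {Dv Dh : ℕ} (M : Matrix (Fin Dv × Fin Dh) (Fin Dv × Fin Dh) ℂ) :
    Matrix (Fin Dv) (Fin Dv) ℂ :=
  Matrix.of fun p v => ∑ q, M (p, q) (v, q)

open Real InformationTheory Set
open scoped InnerProductSpace

lemma monotoneOn_add_one_mul_log_sub :
    MonotoneOn (fun x : ℝ => (x + 1) * log x - 2 * (x - 1)) (Ioi 0) := by
  have hderiv : ∀ x ∈ Ioi (0 : ℝ), HasDerivAt (fun x : ℝ => (x + 1) * log x - 2 * (x - 1))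
      (1 * log x + (x + 1) * x⁻¹ - 2 * 1) x := fun x hx =>
    (((hasDerivAt_id x).add_const 1).mul (hasDerivAt_log (mem_Ioi.1 hx).ne')).sub
      (((hasDerivAt_id x).sub_const 1).const_mul 2)
  refine monotoneOn_of_deriv_nonneg (convex_Ioi 0)
    (HasDerivAt.continuousOn hderiv) (fun x hx => ?_) (fun x hx => ?_)
  · exact (hderiv x (interior_subset hx)).differentiableAt.differentiableWithinAt
  · rw [interior_Ioi] at hx
    rw [(hderiv x hx).deriv]
    have hx' : (x + 1) * x⁻¹ = 1 + x⁻¹ := by field_simp [(mem_Ioi.1 hx).ne']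
    linarith [one_sub_inv_le_log_of_pos hx]

/-- `F x = 2 (x + 2) klFun x - 3 (x - 1)²` vanishes at `1` and `F' = 4 G` for the increasing
function `G x = (x + 1) log x - 2 (x - 1)`, which also vanishes at `1`; so `F` is least at `1`. -/
lemma three_mul_sq_sub_one_le_mul_klFun {x : ℝ} (hx : 0 ≤ x) :
    3 * (x - 1) ^ 2 ≤ 2 * (x + 2) * klFun x := by
  set F : ℝ → ℝ := fun x => 2 * (x + 2) * klFun x - 3 * (x - 1) ^ 2 with hFdef
  have hF : ∀ x ∈ Ioi (0 : ℝ), HasDerivAt F (4 * ((x + 1) * log x - 2 * (x - 1))) x :=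
    fun x hx =>
      ((((hasDerivAt_id x).add_const 2).const_mul 2).mul
        (hasDerivAt_klFun (mem_Ioi.1 hx).ne')).sub
        ((((hasDerivAt_id x).sub_const 1).pow 2).const_mul 3) |>.congr_deriv
        (by simp only [klFun_apply, id]; norm_num; ring)
  have hFcont : Continuous F := by have := continuous_klFun; fun_prop
  have hF1 : F 1 = 0 := by simp [hFdef, klFun_one]
  suffices 0 ≤ F x by simp only [hFdef] at this; linarith
  rcases le_total x 1 with hx1 | hx1
  · have hanti : AntitoneOn F (Icc 0 1) := by
      refine antitoneOn_of_deriv_nonpos (convex_Icc 0 1) hFcont.continuousOn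
        (fun y hy => ?_) (fun y hy => ?_) <;> rw [interior_Icc] at hy
      · exact (hF y hy.1).differentiableAt.differentiableWithinAt
      · have hG := monotoneOn_add_one_mul_log_sub hy.1 (mem_Ioi.2 one_pos) hy.2.le
        norm_num at hG
        rw [(hF y hy.1).deriv]
        linarith
    simpa [hF1] using hanti ⟨hx, hx1⟩ ⟨zero_le_one, le_rfl⟩ hx1
  · have hmono : MonotoneOn F (Ici 1) := by
      refine monotoneOn_of_deriv_nonneg (convex_Ici 1) hFcont.continuousOn
        (fun y hy => ?_) (fun y hy => ?_) <;> rw [interior_Ici] at hy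
      all_goals have hy0 : y ∈ Ioi 0 := mem_Ioi.2 (zero_lt_one.trans (mem_Ioi.1 hy))
      · exact (hF y hy0).differentiableAt.differentiableWithinAt
      · have hG := monotoneOn_add_one_mul_log_sub (mem_Ioi.2 one_pos) hy0 hy.le
        norm_num at hG
        rw [(hF y hy0).deriv]
        linarith
    simpa [hF1] using hmono self_mem_Ici hx1 hx1

lemma abs_sub_le_sqrt_mul_sqrt_mul_klFun {p q : ℝ} (hp : 0 ≤ p) (hq : 0 < q) :
    |p - q| ≤ √(2 / 3 * (p + 2 * q)) * √(q * klFun (p / q)) := by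
  have key := three_mul_sq_sub_one_le_mul_klFun (div_nonneg hp hq.le)
  rw [← sqrt_mul (by positivity), ← sqrt_sq_eq_abs]
  refine sqrt_le_sqrt ?_
  have hp' : p = q * (p / q) := by field_simp
  calc (p - q) ^ 2 = q ^ 2 * (p / q - 1) ^ 2 := by rw [hp']; field_simp
    _ ≤ q ^ 2 * (2 / 3 * (p / q + 2) * klFun (p / q)) := by gcongr; linarith
    _ = 2 / 3 * (p + 2 * q) * (q * klFun (p / q)) := by field_simp

theorem sum_abs_sub_le_sqrt_two_mul_sum_mul_klFun {ι : Type*} [Fintype ι] {p q : ι → ℝ}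
    (hp : ∀ i, 0 ≤ p i) (hq : ∀ i, 0 < q i) (hp1 : ∑ i, p i = 1) (hq1 : ∑ i, q i = 1) :
    ∑ i, |p i - q i| ≤ √(2 * ∑ i, q i * klFun (p i / q i)) := by
  have hweights : ∑ i, 2 / 3 * (p i + 2 * q i) = 2 := by
    rw [← Finset.mul_sum, Finset.sum_add_distrib, ← Finset.mul_sum, hp1, hq1]; norm_num
  calc ∑ i, |p i - q i|
      ≤ ∑ i, √(2 / 3 * (p i + 2 * q i)) * √(q i * klFun (p i / q i)) :=
        Finset.sum_le_sum fun i _ => abs_sub_le_sqrt_mul_sqrt_mul_klFun (hp i) (hq i)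
    _ ≤ √(∑ i, 2 / 3 * (p i + 2 * q i)) * √(∑ i, q i * klFun (p i / q i)) :=
        sum_sqrt_mul_sqrt_le _ (fun i => by have := hp i; have := hq i; positivity)
          (fun i => mul_nonneg (hq i).le (klFun_nonneg (div_nonneg (hp i) (hq i).le)))
    _ = √(2 * ∑ i, q i * klFun (p i / q i)) := by rw [hweights, sqrt_mul zero_le_two]

lemma sum_inv_card_mul_klFun_eq {ι : Type*} [Fintype ι] [Nonempty ι] {p : ι → ℝ}
    (hp1 : ∑ i, p i = 1) :
    ∑ i, (Fintype.card ι : ℝ)⁻¹ * klFun (p i / (Fintype.card ι : ℝ)⁻¹) =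
      log (Fintype.card ι) - ∑ i, negMulLog (p i) := by
  set n : ℝ := (Fintype.card ι : ℝ)
  have hn : n ≠ 0 := by positivity
  have hterm : ∀ i, n⁻¹ * klFun (p i / n⁻¹) = p i * log n - negMulLog (p i) + n⁻¹ - p i := by
    intro i
    rw [div_inv_eq_mul, klFun_apply, negMulLog]
    rcases eq_or_ne (p i) 0 with h | h
    · simp [h]
    · rw [log_mul h hn]; field_simp; ring
  simp only [hterm, Finset.sum_sub_distrib, Finset.sum_add_distrib, ← Finset.sum_mul, hp1,
    Finset.sum_const, Finset.card_univ, nsmul_eq_mul]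
  field_simp
  ring

theorem sum_abs_sub_inv_card_le_sqrt {ι : Type*} [Fintype ι] {p : ι → ℝ}
    (hp : ∀ i, 0 ≤ p i) (hp1 : ∑ i, p i = 1) :
    ∑ i, |p i - (Fintype.card ι : ℝ)⁻¹| ≤
      √(2 * (log (Fintype.card ι) - ∑ i, negMulLog (p i))) := by
  have : Nonempty ι := by
    by_contra h; rw [not_nonempty_iff] at h; simp at hp1
  rw [← sum_inv_card_mul_klFun_eq hp1]
  refine sum_abs_sub_le_sqrt_two_mul_sum_mul_klFun hp (fun _ => by positivity) hp1 ?_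
  simp

section Spectral

variable {n : Type*} [Fintype n] [DecidableEq n]

lemma trace_eq_sum_inner_toEuclideanCLM (A : Matrix n n ℂ)
    (b : OrthonormalBasis n ℂ (EuclideanSpace ℂ n)) :
    A.trace = ∑ i, ⟪b i, toEuclideanCLM (𝕜 := ℂ) A (b i)⟫_ℂ := by
  have := LinearMap.trace_eq_sum_inner (Matrix.toEuclideanLin A) b
  rwa [Matrix.toEuclideanLin_eq_toLin_orthonormal, Matrix.trace_toLin_eq] at this

lemma norm_inner_toEuclideanCLM_le_opNorm (A : Matrix n n ℂ) {u : EuclideanSpace ℂ n}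
    (hu : ‖u‖ = 1) : ‖⟪u, Matrix.toEuclideanCLM (𝕜 := ℂ) A u⟫_ℂ‖ ≤ opNorm A := by
  calc ‖⟪u, Matrix.toEuclideanCLM (𝕜 := ℂ) A u⟫_ℂ‖
      ≤ ‖u‖ * (opNorm A * ‖u‖) :=
        (norm_inner_le_norm _ _).trans
          (mul_le_mul_of_nonneg_left (ContinuousLinearMap.le_opNorm _ _) (norm_nonneg _))
    _ = opNorm A := by rw [hu, mul_one, one_mul]

lemma toEuclideanCLM_sub_smul_one_eigenvectorBasis {σ : Matrix n n ℂ} (hσ : σ.IsHermitian)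
    (s : ℝ) (i : n) :
    Matrix.toEuclideanCLM (𝕜 := ℂ) (σ - (s : ℂ) • 1) (hσ.eigenvectorBasis i) =
      ((hσ.eigenvalues i - s : ℝ) : ℂ) • hσ.eigenvectorBasis i := by
  ext j
  have := congrFun (hσ.mulVec_eigenvectorBasis i) j
  simp only [Pi.smul_apply] at this
  simp [Matrix.smul_mulVec, this, sub_mul, Complex.real_smul]

theorem norm_trace_mul_sub_smul_one_le {σ : Matrix n n ℂ} (hσ : σ.IsHermitian)
    (O : Matrix n n ℂ) (s : ℝ) :
    ‖(O * (σ - (s : ℂ) • 1)).trace‖ ≤ opNorm O * ∑ i, |hσ.eigenvalues i - s| := by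
  set e := hσ.eigenvectorBasis
  rw [trace_eq_sum_inner_toEuclideanCLM _ e, Finset.mul_sum]
  refine (norm_sum_le _ _).trans (Finset.sum_le_sum fun i _ => ?_)
  rw [map_mul, mul_apply_eq_comp, toEuclideanCLM_sub_smul_one_eigenvectorBasis,
    map_smul, inner_smul_right, norm_mul, Complex.norm_real, Real.norm_eq_abs, mul_comm]
  exact mul_le_mul_of_nonneg_right
    (norm_inner_toEuclideanCLM_le_opNorm O (e.orthonormal.1 i)) (abs_nonneg _)

lemma Matrix.IsHermitian.sum_eigenvalues_eq_one {σ : Matrix n n ℂ} (hσ : σ.IsHermitian)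
    (h1 : σ.trace = 1) : ∑ i, hσ.eigenvalues i = 1 := by
  simpa using congrArg Complex.re (hσ.trace_eq_sum_eigenvalues.symm.trans h1)

end Spectral

section PartialTrace

variable {Dv Dh : ℕ}

lemma trH_eq_sum_submatrix (M : Matrix (Fin Dv × Fin Dh) (Fin Dv × Fin Dh) ℂ) :
    trH M = ∑ q, M.submatrix (·, q) (·, q) := by
  ext p v
  simp [trH, Matrix.sum_apply]

lemma posSemidef_trH {ρ : Matrix (Fin Dv × Fin Dh) (Fin Dv × Fin Dh) ℂ} (hρ : ρ.PosSemidef) :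
    (trH ρ).PosSemidef := by
  rw [trH_eq_sum_submatrix]
  exact Matrix.posSemidef_sum _ fun q _ => hρ.submatrix _

lemma trace_trH (M : Matrix (Fin Dv × Fin Dh) (Fin Dv × Fin Dh) ℂ) :
    (trH M).trace = M.trace := by
  simp [Matrix.trace, trH, Fintype.sum_prod_type]

lemma trH_sub_smul_one (M : Matrix (Fin Dv × Fin Dh) (Fin Dv × Fin Dh) ℂ) (s : ℂ) :
    trH (M - s • 1) = trH M - (s * Dh) • 1 := by
  ext p v
  by_cases h : p = v <;> simp [trH, Matrix.one_apply, Finset.sum_sub_distrib, h, mul_comm]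

lemma trace_kronecker_one_mul (O : Matrix (Fin Dv) (Fin Dv) ℂ)
    (M : Matrix (Fin Dv × Fin Dh) (Fin Dv × Fin Dh) ℂ) :
    ((O ⊗ₖ (1 : Matrix (Fin Dh) (Fin Dh) ℂ)) * M).trace = (O * trH M).trace := by
  simp only [Matrix.trace, Matrix.diag, Matrix.mul_apply, trH, Matrix.of_apply,
    Matrix.kroneckerMap_apply, Matrix.one_apply, Fintype.sum_prod_type, mul_ite, mul_one,
    mul_zero, ite_mul, zero_mul, Finset.sum_ite_eq, Finset.mem_univ, if_true, Finset.mul_sum]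
  exact Finset.sum_congr rfl fun p _ => Finset.sum_comm

end PartialTrace

theorem volume_law_visible_observable_bound_general (Dv Dh : ℕ)
    (ρ : Matrix (Fin Dv × Fin Dh) (Fin Dv × Fin Dh) ℂ)
    (hρ : ρ.PosSemidef) (hρtr : ρ.trace = 1)
    (c : ℝ)
    (hvol : |vNEntropy (trH ρ) - Real.log Dv| ≤ c * Dv / Dh)
    (O : Matrix (Fin Dv) (Fin Dv) ℂ) :
    ‖((O ⊗ₖ (1 : Matrix (Fin Dh) (Fin Dh) ℂ)) *
        (ρ - (((Dv : ℂ) * (Dh : ℂ)))⁻¹ • 1)).trace‖ ≤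
      opNorm O * Real.sqrt (2 * c * Dv / Dh) := by
  have hσ := posSemidef_trH hρ
  have hσtr : (trH ρ).trace = 1 := (trace_trH ρ).trans hρtr
  have hDh : Dh ≠ 0 := by
    rintro rfl
    simp [Matrix.trace] at hρtr
  have hscalar : ((Dv : ℂ) * Dh)⁻¹ * Dh = (((Dv : ℝ)⁻¹ : ℝ) : ℂ) := by
    push_cast
    field_simp [Nat.cast_ne_zero.2 hDh]
  rw [trace_kronecker_one_mul, trH_sub_smul_one, hscalar]
  refine (norm_trace_mul_sub_smul_one_le hσ.1 O _).trans
    (mul_le_mul_of_nonneg_left ?_ (norm_nonneg _))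
  have hpinsker := sum_abs_sub_inv_card_le_sqrt hσ.eigenvalues_nonneg
    (hσ.1.sum_eigenvalues_eq_one hσtr)
  rw [Fintype.card_fin] at hpinsker
  refine hpinsker.trans (Real.sqrt_le_sqrt ?_)
  rw [vNEntropy, dif_pos hσ.1] at hvol
  linarith [(abs_le.1 hvol).1, show 2 * c * Dv / Dh = 2 * (c * Dv / Dh) by ring]

/-- volume-law case of Proposition 1: if a density matrix `ρ` obeys a
volume-law bound `|S(Tr_h ρ) - log Dv| ≤ c Dv / Dh`, then for every Hermitian visible
observable `O`, `|Tr((O ⊗ I)(ρ - I/(Dv·Dh)))| ≤ ‖O‖_∞ √(2 c Dv / Dh)`. -/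
theorem volume_law_visible_observable_bound (Dv Dh : ℕ)
    (ρ : Matrix (Fin Dv × Fin Dh) (Fin Dv × Fin Dh) ℂ)
    (hρ : ρ.PosSemidef) (hρtr : ρ.trace = 1)
    (c : ℝ) (hc : 0 < c)
    (hvol : |vNEntropy (trH ρ) - Real.log Dv| ≤ c * Dv / Dh)
    (O : Matrix (Fin Dv) (Fin Dv) ℂ) (hO : O.IsHermitian) :
    ‖((O ⊗ₖ (1 : Matrix (Fin Dh) (Fin Dh) ℂ)) *
        (ρ - (((Dv : ℂ) * (Dh : ℂ)))⁻¹ • 1)).trace‖ ≤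
      opNorm O * Real.sqrt (2 * c * Dv / Dh) :=
  volume_law_visible_observable_bound_general Dv Dh ρ hρ hρtr c hvol O
end

section
/- Let φ = U·e₀ be a Haar-random unit vector in C^{D_v}⊗C^{D_h}. Then E[ ‖Tr_h |φ⟩⟨φ| − I/D_v‖₂² ] = (D_v + D_h)/(D_v·D_h + 1) − 1/D_v, and in particular E[ ‖Tr_h |φ⟩⟨φ| − I/D_v‖₂² ] ≤ 1/D_h, where ‖·‖₂ is the Frobenius norm. -/
open Matrix BigOperators MeasureTheory
open scoped Kronecker

/-- The Borel/pi measurable-space structure on complex matrices. -/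
noncomputable instance matrixMeasurableSpace {n m : Type*} : MeasurableSpace (Matrix n m ℂ) :=
  inferInstanceAs (MeasurableSpace (n → m → ℂ))

/-- The rank-one projector `|φ⟩⟨φ|` onto a vector `φ`. -/
noncomputable def proj {n : Type*} (φ : n → ℂ) : Matrix n n ℂ :=
  Matrix.of fun i j => φ i * star (φ j)

/-- The Frobenius (Hilbert–Schmidt) norm of a complex matrix. -/
noncomputable def frobNorm {n m : Type*} [Fintype n] [Fintype m] (A : Matrix n m ℂ) : ℝ :=
  Real.sqrt (∑ i, ∑ j, ‖A i j‖ ^ 2)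


/-!
Write `ρ = Tr_h |φ⟩⟨φ|`. Since `Tr ρ = ‖φ‖² = 1`, `‖ρ - I/D_v‖₂² = Tr ρ² - 1/D_v`, and `Tr ρ²` is a
quartic polynomial in the entries of `φ`, so everything reduces to the fourth moments
`E[φ_i φ̄_j φ_k φ̄_l]` of a column of a Haar unitary. Left invariance under diagonal phase
matrices kills every moment whose indices are not paired (`i = j, k = l` or `i = l, k = j`);
left invariance under a Householder reflection mixing two coordinates gives
`E|φ_a|⁴ = 2 E|φ_a|²|φ_b|²`; and `‖φ‖ = 1` normalises. Hence
`E[φ_i φ̄_j φ_k φ̄_l] = (δ_ij δ_kl + δ_il δ_kj) / (N (N + 1))` with `N = D_v D_h`, and summing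
over the index pattern of `Tr ρ²` gives `(D_v D_h² + D_v² D_h) / (N (N + 1))`.
-/

instance {m n : Type*} [Finite m] [Finite n] : BorelSpace (Matrix m n ℂ) :=
  inferInstanceAs (BorelSpace (m → n → ℂ))

namespace Matrix

variable {ι : Type*} [Fintype ι] [DecidableEq ι]

lemma sum_apply_mul_star_apply_eq_one (U : unitaryGroup ι ℂ) (j : ι) :
    ∑ i, (U : Matrix ι ι ℂ) i j * star ((U : Matrix ι ι ℂ) i j) = 1 := by
  have h := congrFun (congrFun (mem_unitaryGroup_iff'.mp U.2) j) j
  simpa only [mul_apply, star_apply, one_apply_eq, mul_comm] using h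

lemma diagonal_mem_unitaryGroup {d : ι → ℂ} (hd : ∀ i, d i * star (d i) = 1) :
    diagonal d ∈ unitaryGroup ι ℂ := by
  rw [mem_unitaryGroup_iff, star_eq_conjTranspose, diagonal_conjTranspose, diagonal_mul_diagonal,
    ← diagonal_one]
  exact congrArg diagonal (funext hd)

lemma one_sub_two_smul_vecMulVec_mem_unitaryGroup {v : ι → ℂ} (hv : star v ⬝ᵥ v = 1) :
    1 - (2 : ℂ) • vecMulVec v (star v) ∈ unitaryGroup ι ℂ := by
  have hproj : vecMulVec v (star v) * vecMulVec v (star v) = vecMulVec v (star v) := by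
    rw [vecMulVec_mul_vecMulVec, hv, one_smul]
  rw [mem_unitaryGroup_iff, star_sub, star_one, star_smul, star_eq_conjTranspose,
    conjTranspose_vecMulVec, star_star]
  simp only [sub_mul, mul_sub, smul_mul_smul_comm, hproj, one_mul, mul_one, star_ofNat]
  module

end Matrix

noncomputable def quartic {ι : Type*} (φ : ι → ℂ) (i j k l : ι) : ℂ :=
  φ i * star (φ j) * (φ k * star (φ l))

lemma quartic_mulVec {ι : Type*} [Fintype ι] (V : Matrix ι ι ℂ) (φ : ι → ℂ) (i j k l : ι) :
    quartic (V *ᵥ φ) i j k l = ∑ p : ι × ι × ι × ι,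
      V i p.1 * star (V j p.2.1) * (V k p.2.2.1 * star (V l p.2.2.2)) *
        quartic φ p.1 p.2.1 p.2.2.1 p.2.2.2 := by
  simp only [quartic, mulVec, dotProduct, star_sum, star_mul', Finset.sum_mul_sum,
    Fintype.sum_prod_type]
  refine Finset.sum_congr rfl fun _ _ => ?_
  rw [Finset.sum_comm]
  refine Finset.sum_congr rfl fun _ _ => Finset.sum_congr rfl fun _ _ =>
    Finset.sum_congr rfl fun _ _ => by ring

section ColumnMoment

variable {ι : Type*} [Fintype ι] [DecidableEq ι] (μ : Measure (unitaryGroup ι ℂ)) (j₀ : ι)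

noncomputable def colMoment (i j k l : ι) : ℂ :=
  ∫ U, quartic (fun x => (U : Matrix ι ι ℂ) x j₀) i j k l ∂μ

lemma integrable_quartic_col [IsFiniteMeasure μ] (i j k l : ι) :
    Integrable (fun U : unitaryGroup ι ℂ => quartic (fun x => (U : Matrix ι ι ℂ) x j₀) i j k l)
      μ := by
  have hentry : ∀ x, Continuous fun U : unitaryGroup ι ℂ => (U : Matrix ι ι ℂ) x j₀ := fun x =>
    (continuous_apply j₀).comp ((continuous_apply x).comp continuous_subtype_val)
  have hcont := ((hentry i).mul (hentry j).star).mul ((hentry k).mul (hentry l).star)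
  refine Integrable.of_bound hcont.aestronglyMeasurable 1 (Filter.Eventually.of_forall fun U => ?_)
  have hle := fun x => entry_norm_bound_of_unitary U.2 x j₀
  simp only [quartic, norm_mul, norm_star]
  exact mul_le_one₀ (mul_le_one₀ (hle i) (norm_nonneg _) (hle j)) (by positivity)
    (mul_le_one₀ (hle k) (norm_nonneg _) (hle l))

lemma colMoment_swap_pairs (i j k l : ι) : colMoment μ j₀ k l i j = colMoment μ j₀ i j k l := by
  simp only [colMoment, quartic, mul_comm]

lemma colMoment_swap_conj (i j k l : ι) : colMoment μ j₀ i l k j = colMoment μ j₀ i j k l := by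
  simp only [colMoment, quartic]
  congr 1 with U
  ring

lemma sum_colMoment_pair [IsProbabilityMeasure μ] : ∑ x, ∑ y, colMoment μ j₀ x x y y = 1 := by
  have hnorm : ∀ U : unitaryGroup ι ℂ,
      ∑ x, ∑ y, quartic (fun x => (U : Matrix ι ι ℂ) x j₀) x x y y = 1 := fun U => by
    simp only [quartic, ← Finset.sum_mul_sum, sum_apply_mul_star_apply_eq_one, one_mul]
  simp only [colMoment]
  simp_rw [← integral_finsetSum _ fun _ _ => integrable_quartic_col μ j₀ _ _ _ _]
  rw [← integral_finsetSum _ fun _ _ => integrable_finsetSum _ fun _ _ =>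
    integrable_quartic_col μ j₀ _ _ _ _]
  simp only [hnorm, integral_const, probReal_univ, one_smul]

variable [μ.IsMulLeftInvariant]

lemma colMoment_eq_integral_mulVec (V : unitaryGroup ι ℂ) (i j k l : ι) :
    colMoment μ j₀ i j k l =
      ∫ U, quartic ((V : Matrix ι ι ℂ) *ᵥ fun x => (U : Matrix ι ι ℂ) x j₀) i j k l ∂μ := by
  rw [colMoment, ← integral_mul_left_eq_self _ V]
  rfl

lemma colMoment_eq_phase_mul {d : ι → ℂ} (hd : ∀ i, d i * star (d i) = 1) (i j k l : ι) :
    colMoment μ j₀ i j k l = d i * star (d j) * (d k * star (d l)) * colMoment μ j₀ i j k l := by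
  conv_lhs => rw [colMoment_eq_integral_mulVec μ j₀ ⟨_, diagonal_mem_unitaryGroup hd⟩]
  rw [colMoment, ← integral_const_mul]
  congr 1 with U
  simp only [mulVec_diagonal, quartic, star_mul']
  ring

/- Multiplying coordinate `a` by `I` multiplies the moment by `I ^ m`, where `m` counts the
occurrences of `a` among `i, k` minus those among `j, l`; unless the indices are paired, `m ≠ 0`
for `a = i` or for `a = k`. -/
open Complex in
lemma colMoment_eq_zero {i j k l : ι} (h : ¬(i = j ∧ k = l) ∧ ¬(i = l ∧ k = j)) :
    colMoment μ j₀ i j k l = 0 := by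
  by_contra hM
  have hphase : ∀ a, (if i = a then I else 1) * star (if j = a then I else 1) *
      ((if k = a then I else 1) * star (if l = a then I else 1)) = 1 := fun a => by
    have hd : ∀ x, (if x = a then I else 1) * star (if x = a then I else 1) = 1 := fun x => by
      split_ifs <;> simp
    exact (mul_eq_right₀ hM).mp (colMoment_eq_phase_mul μ j₀ hd i j k l).symm
  have hi := hphase i
  have hk := hphase k
  clear hphase hM
  split_ifs at hi hk <;> subst_vars <;> simp_all [Complex.ext_iff, (by norm_num : (-1 : ℂ) ≠ 1)]

lemma colMoment_eq_sum [IsFiniteMeasure μ] (V : unitaryGroup ι ℂ) (i j k l : ι) :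
    colMoment μ j₀ i j k l = ∑ p : ι × ι × ι × ι,
      (V : Matrix ι ι ℂ) i p.1 * star ((V : Matrix ι ι ℂ) j p.2.1) *
        ((V : Matrix ι ι ℂ) k p.2.2.1 * star ((V : Matrix ι ι ℂ) l p.2.2.2)) *
        colMoment μ j₀ p.1 p.2.1 p.2.2.1 p.2.2.2 := by
  rw [colMoment_eq_integral_mulVec μ j₀ V]
  simp only [colMoment, ← integral_const_mul]
  rw [← integral_finsetSum _ fun p _ => (integrable_quartic_col μ j₀ _ _ _ _).const_mul _]
  exact integral_congr_ae (Filter.Eventually.of_forall fun U => quartic_mulVec _ _ _ _ _ _)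

/- Row `a` of the reflection `1 - 2 v v*` with `v = (3/5) e_a + (4/5) e_b`
is `(7/25) e_a - (24/25) e_b`. -/
lemma colMoment_householder [IsFiniteMeasure μ] {a b : ι} (hab : a ≠ b) :
    colMoment μ j₀ a a a a = (7 / 25) ^ 4 * colMoment μ j₀ a a a a +
      (24 / 25) ^ 4 * colMoment μ j₀ b b b b +
      4 * (7 / 25) ^ 2 * (24 / 25) ^ 2 * colMoment μ j₀ a a b b := by
  set v : ι → ℂ := fun x => if x = a then 3 / 5 else if x = b then 4 / 5 else 0
  have hrow : ∀ x, (1 - (2 : ℂ) • vecMulVec v (star v)) a x =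
      7 / 25 * (if x = a then 1 else 0) - 24 / 25 * (if x = b then 1 else 0) := fun x => by
    simp only [Matrix.sub_apply, Matrix.smul_apply, one_apply, vecMulVec_apply, v, Pi.star_apply]
    split_ifs <;> subst_vars <;> norm_num at *
  have hv : star v ⬝ᵥ v = 1 := by
    rw [dotProduct, Fintype.sum_eq_add a b hab fun x hx => by simp [v, hx.1, hx.2]]
    simp only [Pi.star_apply, ↓reduceIte, star_div₀, star_ofNat, hab.symm, v]
    norm_num
  conv_lhs => rw [colMoment_eq_sum μ j₀ ⟨_, one_sub_two_smul_vecMulVec_mem_unitaryGroup hv⟩]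
  simp only [hrow, mul_ite, mul_one, mul_zero, star_sub, apply_ite star, star_div₀, star_ofNat,
    star_zero, mul_sub, sub_mul, ite_mul, zero_mul, Finset.sum_sub_distrib, Fintype.sum_prod_type,
    Finset.sum_ite_eq', Finset.mem_univ, ↓reduceIte, hab, hab.symm, and_false, not_false_eq_true,
    and_self, and_true, colMoment_eq_zero μ j₀, ite_self, sub_self, zero_sub, neg_sub, sub_zero,
    sub_neg_eq_add]
  rw [colMoment_swap_conj μ j₀ b b a a, colMoment_swap_pairs μ j₀ a a b b,
    colMoment_swap_conj μ j₀ a a b b]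
  ring

lemma colMoment_diag_eq [IsFiniteMeasure μ] (a b : ι) :
    colMoment μ j₀ a a a a = colMoment μ j₀ b b b b := by
  rcases eq_or_ne a b with rfl | hab
  · rfl
  have hab' := colMoment_householder μ j₀ hab
  have hba := colMoment_householder μ j₀ hab.symm
  rw [colMoment_swap_pairs μ j₀ a a b b] at hba
  -- `(1 - (7/25)^4 + (24/25)^4) (D_a - D_b) = 0` and `1 - (7/25)^4 + (24/25)^4 = 720000 / 390625`
  linear_combination (390625 / 720000 : ℂ) * (hab' - hba)

lemma two_mul_colMoment_pair [IsFiniteMeasure μ] {a b : ι} (hab : a ≠ b) :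
    2 * colMoment μ j₀ a a b b = colMoment μ j₀ a a a a := by
  -- as `(7/25)^2 + (24/25)^2 = 1`, `1 - (7/25)^4 - (24/25)^4 = 2 (7/25)^2 (24/25)^2`
  linear_combination (-390625 / 56448 : ℂ) * colMoment_householder μ j₀ hab +
    (331776 / 56448 : ℂ) * colMoment_diag_eq μ j₀ a b

lemma colMoment_pair_eq [IsFiniteMeasure μ] (x y : ι) :
    colMoment μ j₀ x x y y = (1 + if x = y then 1 else 0) * colMoment μ j₀ j₀ j₀ j₀ j₀ / 2 := by
  rw [← colMoment_diag_eq μ j₀ x j₀]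
  split_ifs with hxy
  · subst hxy
    ring
  · linear_combination two_mul_colMoment_pair μ j₀ hxy / 2

lemma colMoment_self [IsProbabilityMeasure μ] :
    colMoment μ j₀ j₀ j₀ j₀ j₀ = 2 / (Fintype.card ι * (Fintype.card ι + 1)) := by
  have h : ∑ x : ι, ∑ y : ι, (1 + if x = y then 1 else 0) * colMoment μ j₀ j₀ j₀ j₀ j₀ / 2 = 1 :=
    Eq.trans (Finset.sum_congr rfl fun x _ => Finset.sum_congr rfl fun y _ =>
      (colMoment_pair_eq μ j₀ x y).symm) (sum_colMoment_pair μ j₀)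
  have hcount : ∑ x : ι, ∑ y : ι, (1 + if x = y then 1 else 0 : ℂ) =
      Fintype.card ι * (Fintype.card ι + 1) := by
    simp only [Finset.sum_add_distrib, Finset.sum_const, Finset.card_univ, nsmul_eq_mul, mul_one,
      Finset.sum_ite_eq, Finset.mem_univ, ↓reduceIte]
    ring
  simp_rw [mul_div_assoc, ← Finset.sum_mul, hcount] at h
  rw [eq_div_iff (left_ne_zero_of_mul_eq_one h)]
  linear_combination 2 * h

theorem colMoment_eq [IsProbabilityMeasure μ] (i j k l : ι) :
    colMoment μ j₀ i j k l =
      ((if i = j ∧ k = l then 1 else 0) + (if i = l ∧ k = j then 1 else 0)) /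
        (Fintype.card ι * (Fintype.card ι + 1)) := by
  by_cases hijkl : i = j ∧ k = l
  · obtain ⟨rfl, rfl⟩ := hijkl
    rw [colMoment_pair_eq, colMoment_self]
    by_cases hik : i = k
    · subst hik
      simp only [and_self, if_true]
      ring
    · simp only [hik, Ne.symm hik, and_self, if_true, if_false]
      ring
  by_cases hilkj : i = l ∧ k = j
  · obtain ⟨rfl, rfl⟩ := hilkj
    have hik : i ≠ k := fun h => hijkl ⟨h, h.symm⟩
    rw [colMoment_swap_conj, colMoment_pair_eq, colMoment_self]
    simp only [hik, hik.symm, if_false, and_self, if_true]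
    ring
  rw [colMoment_eq_zero μ j₀ ⟨hijkl, hilkj⟩]
  simp [hijkl, hilkj]

end ColumnMoment

lemma frobNorm_sq {m n : Type*} [Fintype m] [Fintype n] (A : Matrix m n ℂ) :
    frobNorm A ^ 2 = ∑ i, ∑ j, ‖A i j‖ ^ 2 :=
  Real.sq_sqrt (by positivity)

lemma frobNorm_sub_smul_one_sq {n : Type*} [Fintype n] [DecidableEq n] (A : Matrix n n ℂ)
    (c : ℝ) :
    frobNorm (A - (c : ℂ) • 1) ^ 2 =
      frobNorm A ^ 2 - 2 * c * A.trace.re + Fintype.card n * c ^ 2 := by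
  have hentry : ∀ i j, ‖A i j - ((c : ℂ) • (1 : Matrix n n ℂ)) i j‖ ^ 2 =
      ‖A i j‖ ^ 2 - 2 * c * (if i = j then (A i j).re else 0) + (if i = j then c ^ 2 else 0) := by
    intro i j
    rw [← Complex.normSq_eq_norm_sq, ← Complex.normSq_eq_norm_sq, Complex.normSq_sub]
    by_cases hij : i = j
    · simp only [hij, Matrix.smul_apply, one_apply, ↓reduceIte, smul_eq_mul, mul_one,
        Complex.normSq_ofReal, Complex.conj_ofReal, Complex.mul_re, Complex.ofReal_re,
        Complex.ofReal_im, mul_zero, sub_zero]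
      ring
    · simp only [Matrix.smul_apply, one_apply, hij, ↓reduceIte, smul_eq_mul, mul_zero, map_zero,
        add_zero, Complex.zero_re, sub_zero]
  simp only [frobNorm_sq, Matrix.sub_apply, hentry, Finset.sum_add_distrib, Finset.sum_sub_distrib,
    ← Finset.mul_sum, Finset.sum_ite_eq, Finset.mem_univ, if_true, trace, diag, Complex.re_sum,
    Finset.sum_const, Finset.card_univ, nsmul_eq_mul]

lemma trace_trH_proj {Dv Dh : ℕ} (φ : Fin Dv × Fin Dh → ℂ) :
    (trH (proj φ)).trace = ∑ i, φ i * star (φ i) := by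
  simp [trace, trH, proj, Fintype.sum_prod_type]

lemma frobNorm_trH_proj_sq {Dv Dh : ℕ} (φ : Fin Dv × Fin Dh → ℂ) :
    frobNorm (trH (proj φ)) ^ 2 =
      (∑ p, ∑ v, ∑ q, ∑ q', quartic φ (p, q) (v, q) (v, q') (p, q')).re := by
  have hentry : ∀ p v, ‖trH (proj φ) p v‖ ^ 2 =
      (∑ q, ∑ q', quartic φ (p, q) (v, q) (v, q') (p, q')).re := by
    intro p v
    rw [← Complex.normSq_eq_norm_sq, ← Complex.ofReal_re (Complex.normSq _), ← Complex.mul_conj]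
    simp only [trH, proj, of_apply, map_sum, map_mul, Finset.sum_mul_sum]
    congr 1
    refine Finset.sum_congr rfl fun q _ => Finset.sum_congr rfl fun q' _ => ?_
    simp only [quartic, Complex.star_def, Complex.conj_conj]
    ring
  simp only [frobNorm_sq, hentry, Complex.re_sum]

lemma frobNorm_trH_proj_sub_sq {Dv Dh : ℕ} (φ : Fin Dv × Fin Dh → ℂ)
    (hφ : ∑ i, φ i * star (φ i) = 1) :
    frobNorm (trH (proj φ) - ((Dv : ℂ))⁻¹ • 1) ^ 2 =
      (∑ p, ∑ v, ∑ q, ∑ q', quartic φ (p, q) (v, q) (v, q') (p, q')).re - 1 / Dv := by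
  have hcast : ((Dv : ℂ))⁻¹ = (((Dv : ℝ))⁻¹ : ℝ) := by push_cast; rfl
  rw [hcast, frobNorm_sub_smul_one_sq, frobNorm_trH_proj_sq, trace_trH_proj, hφ, Fintype.card_fin,
    Complex.one_re]
  rcases eq_or_ne (Dv : ℝ) 0 with hDv | hDv
  · simp [hDv]
  · field_simp
    ring

lemma sum_colMoment_trH {Dv Dh : ℕ}
    (μ : Measure (unitaryGroup (Fin Dv × Fin Dh) ℂ)) [IsProbabilityMeasure μ]
    [μ.IsMulLeftInvariant] (j₀ : Fin Dv × Fin Dh) :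
    ∑ p, ∑ v, ∑ q, ∑ q', colMoment μ j₀ (p, q) (v, q) (v, q') (p, q') =
      ((Dv : ℂ) + Dh) / (Dv * Dh + 1) := by
  have hDv : (Dv : ℂ) ≠ 0 := Nat.cast_ne_zero.mpr (Fin.pos j₀.1).ne'
  have hDh : (Dh : ℂ) ≠ 0 := Nat.cast_ne_zero.mpr (Fin.pos j₀.2).ne'
  have hN1 : (Dv : ℂ) * Dh + 1 ≠ 0 := by exact_mod_cast Nat.succ_ne_zero (Dv * Dh)
  have hterm : ∀ p v q q', colMoment μ j₀ (p, q) (v, q) (v, q') (p, q') =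
      ((if p = v then 1 else 0) + (if q = q' then 1 else 0)) / (Dv * Dh * (Dv * Dh + 1)) := by
    intro p v q q'
    rw [colMoment_eq, Fintype.card_prod, Fintype.card_fin, Fintype.card_fin, Nat.cast_mul]
    congr 2 <;> simp only [Prod.mk.injEq, and_true, true_and, and_iff_left_of_imp Eq.symm]
  simp only [hterm, ← Finset.sum_div, Finset.sum_add_distrib, Finset.sum_const, Finset.card_univ,
    Fintype.card_fin, nsmul_eq_mul, ← Finset.mul_sum, Finset.sum_ite_eq, Finset.mem_univ, if_true,
    mul_one]
  field_simp
  ring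

theorem integral_frobNorm_trH_proj_sub_sq {Dv Dh : ℕ}
    (μ : Measure (unitaryGroup (Fin Dv × Fin Dh) ℂ)) [IsProbabilityMeasure μ]
    [μ.IsMulLeftInvariant] (j₀ : Fin Dv × Fin Dh) :
    ∫ U, frobNorm (trH (proj fun i => (U : Matrix (Fin Dv × Fin Dh) (Fin Dv × Fin Dh) ℂ) i j₀) -
        ((Dv : ℂ))⁻¹ • 1) ^ 2 ∂μ = ((Dv : ℝ) + Dh) / ((Dv : ℝ) * Dh + 1) - 1 / Dv := by
  have hint := integrable_quartic_col μ j₀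
  have hsum : Integrable (fun U : unitaryGroup (Fin Dv × Fin Dh) ℂ => ∑ p, ∑ v, ∑ q, ∑ q',
      quartic (fun i => (U : Matrix (Fin Dv × Fin Dh) (Fin Dv × Fin Dh) ℂ) i j₀)
        (p, q) (v, q) (v, q') (p, q')) μ :=
    integrable_finsetSum _ fun _ _ => integrable_finsetSum _ fun _ _ =>
      integrable_finsetSum _ fun _ _ => integrable_finsetSum _ fun _ _ => hint _ _ _ _
  have hmoments : ∫ U, (∑ p, ∑ v, ∑ q, ∑ q', quartic
        (fun i => (U : Matrix (Fin Dv × Fin Dh) (Fin Dv × Fin Dh) ℂ) i j₀)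
        (p, q) (v, q) (v, q') (p, q')).re ∂μ =
      (∑ p, ∑ v, ∑ q, ∑ q', colMoment μ j₀ (p, q) (v, q) (v, q') (p, q')).re := by
    refine (integral_re hsum).trans (congrArg Complex.re ?_)
    simp only [colMoment]
    rw [integral_finsetSum _ fun _ _ => integrable_finsetSum _ fun _ _ =>
      integrable_finsetSum _ fun _ _ => integrable_finsetSum _ fun _ _ => hint _ _ _ _]
    simp_rw [integral_finsetSum _ fun _ _ => integrable_finsetSum _ fun _ _ =>
      integrable_finsetSum _ fun _ _ => hint _ _ _ _]
    simp_rw [integral_finsetSum _ fun _ _ => integrable_finsetSum _ fun _ _ => hint _ _ _ _]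
    simp_rw [integral_finsetSum _ fun _ _ => hint _ _ _ _]
  simp_rw [frobNorm_trH_proj_sub_sq _ (sum_apply_mul_star_apply_eq_one _ j₀)]
  rw [integral_sub ?_ (integrable_const _), hmoments, integral_const, sum_colMoment_trH,
    show ((Dv : ℂ) + Dh) / (Dv * Dh + 1) = (((Dv : ℝ) + Dh) / (Dv * Dh + 1) : ℝ) by push_cast; rfl,
    Complex.ofReal_re, probReal_univ, one_smul]
  exact hsum.re

lemma add_div_mul_add_one_sub_one_div_le {x y : ℝ} (hx : 0 < x) (hy : 0 < y) :
    (x + y) / (x * y + 1) - 1 / x ≤ 1 / y := by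
  calc (x + y) / (x * y + 1) - 1 / x ≤ (x + y) / (x * y) - 1 / x := by gcongr; linarith
    _ = 1 / y := by field_simp; ring

/-- for a Haar-random unit vector `φ = U e₀` in `ℂ^{Dv} ⊗ ℂ^{Dh}`,
`E[‖Tr_h |φ⟩⟨φ| - I/Dv‖₂²] = (Dv + Dh)/(Dv Dh + 1) - 1/Dv`, and in particular this
expectation is at most `1/Dh`. -/
theorem haar_average_frobenius_distance_sq (Dv Dh : ℕ) (hv : 0 < Dv) (hh : 0 < Dh)
    (μ : Measure (Matrix.unitaryGroup (Fin Dv × Fin Dh) ℂ)) [IsProbabilityMeasure μ]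
    (hμ : ∀ V : Matrix.unitaryGroup (Fin Dv × Fin Dh) ℂ,
      Measure.map (fun U => V * U) μ = μ) :
    (∫ U : Matrix.unitaryGroup (Fin Dv × Fin Dh) ℂ,
        (frobNorm (trH (proj (fun i =>
            (U : Matrix (Fin Dv × Fin Dh) (Fin Dv × Fin Dh) ℂ) i (⟨0, hv⟩, ⟨0, hh⟩))) -
          ((Dv : ℂ))⁻¹ • 1)) ^ 2 ∂μ =
      ((Dv : ℝ) + Dh) / ((Dv : ℝ) * Dh + 1) - 1 / Dv) ∧
    (∫ U : Matrix.unitaryGroup (Fin Dv × Fin Dh) ℂ,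
        (frobNorm (trH (proj (fun i =>
            (U : Matrix (Fin Dv × Fin Dh) (Fin Dv × Fin Dh) ℂ) i (⟨0, hv⟩, ⟨0, hh⟩))) -
          ((Dv : ℂ))⁻¹ • 1)) ^ 2 ∂μ ≤ 1 / Dh) := by
  have : μ.IsMulLeftInvariant := ⟨hμ⟩
  have hmean := integral_frobNorm_trH_proj_sub_sq μ (⟨0, hv⟩, ⟨0, hh⟩)
  exact ⟨hmean, hmean ▸ add_div_mul_add_one_sub_one_div_le (Nat.cast_pos.mpr hv)
    (Nat.cast_pos.mpr hh)⟩
end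

section
/- Let K be a Hermitian matrix indexed by (Fin D_v × Fin D_h), set D = D_v·D_h, and let a, b be natural numbers. Then (1/D²)·|Tr( (Tr_v K^{a})·(Tr_v K^{b}) )| ≤ ‖K‖_∞^{a+b} / D_h, where Tr_v is the partial trace over the visible (first) factor and ‖·‖_∞ is the operator norm. -/
open Matrix BigOperators

/-- Partial trace over the visible (first) tensor factor. -/
noncomputable def trV {Dv Dh : ℕ} (M : Matrix (Fin Dv × Fin Dh) (Fin Dv × Fin Dh) ℂ) :
    Matrix (Fin Dh) (Fin Dh) ℂ :=
  Matrix.of fun q s => ∑ p, M (p, q) (p, s)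

/-
Writing `Tr_v M = ∑ₚ Mₚₚ` as a sum of its `D_v` diagonal blocks, each a compression of `M` by an
isometry and hence of operator norm at most `‖M‖`, gives `‖Tr_v M‖_∞ ≤ D_v ‖M‖_∞`. Bounding a trace
by `D_h` times the operator norm then yields `|Tr((Tr_v K^a)(Tr_v K^b))| ≤ D_h D_v² ‖K‖_∞^{a+b}`.
-/

open scoped Matrix.Norms.L2Operator

namespace Matrix
variable {𝕜 : Type*} [RCLike 𝕜] {l m n o : Type*} [Fintype l] [Fintype m] [Fintype n] [Fintype o]
  [DecidableEq l] [DecidableEq m] [DecidableEq n] [DecidableEq o]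

lemma l2_opNorm_one_le : ‖(1 : Matrix n n 𝕜)‖ ≤ 1 := by
  rw [cstar_norm_def, map_one]
  exact ContinuousLinearMap.norm_id_le

omit [DecidableEq m] in
lemma l2_opNorm_le_one_of_conjTranspose_mul_self_eq_one {E : Matrix m n 𝕜}
    (hE : Eᴴ * E = 1) : ‖E‖ ≤ 1 := by
  have h := l2_opNorm_conjTranspose_mul_self E
  rw [hE] at h
  nlinarith [l2_opNorm_one_le (𝕜 := 𝕜) (n := n), norm_nonneg E]

lemma l2_opNorm_one_submatrix_le {f : l → m} (hf : Function.Injective f) :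
    ‖(1 : Matrix m m 𝕜).submatrix id f‖ ≤ 1 := by
  refine l2_opNorm_le_one_of_conjTranspose_mul_self_eq_one ?_
  ext i j
  simp [mul_apply, one_apply, hf.eq_iff]

omit [Fintype l] [Fintype o] [DecidableEq l] [DecidableEq o] in
lemma submatrix_eq_one_submatrix_mul_mul (A : Matrix m n 𝕜) (f : l → m) (g : o → n) :
    A.submatrix f g =
      ((1 : Matrix m m 𝕜).submatrix id f)ᴴ * A * (1 : Matrix n n 𝕜).submatrix id g := by
  ext i j
  simp [mul_apply, one_apply]

lemma l2_opNorm_submatrix_le (A : Matrix m n 𝕜) {f : l → m} {g : o → n}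
    (hf : Function.Injective f) (hg : Function.Injective g) : ‖A.submatrix f g‖ ≤ ‖A‖ := by
  rw [submatrix_eq_one_submatrix_mul_mul]
  calc _ ≤ ‖((1 : Matrix m m 𝕜).submatrix id f)ᴴ‖ * ‖A‖ * ‖(1 : Matrix n n 𝕜).submatrix id g‖ :=
        (l2_opNorm_mul _ _).trans (mul_le_mul_of_nonneg_right (l2_opNorm_mul _ _) (norm_nonneg _))
    _ ≤ 1 * ‖A‖ * 1 := by
        rw [l2_opNorm_conjTranspose]
        gcongr
        exacts [l2_opNorm_one_submatrix_le hf, l2_opNorm_one_submatrix_le hg]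
    _ = ‖A‖ := by ring

omit [DecidableEq m] in
lemma norm_entry_le_l2_opNorm (A : Matrix m n 𝕜) (i : m) (j : n) : ‖A i j‖ ≤ ‖A‖ := by
  classical
  have h := l2_opNorm_submatrix_le A (f := fun _ : Unit => i) (g := fun _ : Unit => j)
    (Function.injective_of_subsingleton _) (Function.injective_of_subsingleton _)
  have h1 : A.submatrix (fun _ : Unit => i) (fun _ : Unit => j) = diagonal fun _ => A i j := by
    ext; simp
  rwa [h1, l2_opNorm_diagonal, pi_norm_const] at h

lemma norm_trace_le_card_mul_l2_opNorm (A : Matrix n n 𝕜) :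
    ‖A.trace‖ ≤ Fintype.card n * ‖A‖ := by
  calc ‖A.trace‖ ≤ ∑ i, ‖A i i‖ := norm_sum_le _ _
    _ ≤ ∑ _i : n, ‖A‖ := Finset.sum_le_sum fun i _ => A.norm_entry_le_l2_opNorm i i
    _ = Fintype.card n * ‖A‖ := by simp

lemma l2_opNorm_pow_le (A : Matrix n n 𝕜) (k : ℕ) : ‖A ^ k‖ ≤ ‖A‖ ^ k := by
  induction k with
  | zero => simpa using l2_opNorm_one_le
  | succ k ih =>
    rw [pow_succ, pow_succ]
    exact (l2_opNorm_mul _ _).trans (mul_le_mul_of_nonneg_right ih (norm_nonneg _))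
end Matrix

lemma trV_eq_sum_submatrix {Dv Dh : ℕ} (M : Matrix (Fin Dv × Fin Dh) (Fin Dv × Fin Dh) ℂ) :
    trV M = ∑ p, M.submatrix (Prod.mk p) (Prod.mk p) := by
  ext q s
  simp [trV, Matrix.sum_apply]

lemma l2_opNorm_trV_le {Dv Dh : ℕ} (M : Matrix (Fin Dv × Fin Dh) (Fin Dv × Fin Dh) ℂ) :
    ‖trV M‖ ≤ Dv * ‖M‖ := by
  rw [trV_eq_sum_submatrix]
  calc _ ≤ ∑ _p : Fin Dv, ‖M‖ := norm_sum_le_of_le _ fun p _ =>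
        M.l2_opNorm_submatrix_le (Prod.mk_right_injective p) (Prod.mk_right_injective p)
    _ = Dv * ‖M‖ := by simp

theorem trV_power_product_bound_general (Dv Dh : ℕ)
    (K : Matrix (Fin Dv × Fin Dh) (Fin Dv × Fin Dh) ℂ) (a b : ℕ) :
    (((Dv : ℝ) * (Dh : ℝ)) ^ 2)⁻¹ *
        ‖((trV (K ^ a)) * (trV (K ^ b))).trace‖ ≤
      opNorm K ^ (a + b) / Dh := by
  have hnorm : 0 ≤ opNorm K := norm_nonneg K
  have htrV : ∀ c, ‖trV (K ^ c)‖ ≤ Dv * opNorm K ^ c := fun c =>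
    (l2_opNorm_trV_le _).trans (by gcongr; exact K.l2_opNorm_pow_le c)
  have key : ‖(trV (K ^ a) * trV (K ^ b)).trace‖ ≤
      Dh * ((Dv * opNorm K ^ a) * (Dv * opNorm K ^ b)) :=
    calc _ ≤ Dh * ‖trV (K ^ a) * trV (K ^ b)‖ := by
          simpa using (trV (K ^ a) * trV (K ^ b)).norm_trace_le_card_mul_l2_opNorm
      _ ≤ Dh * (‖trV (K ^ a)‖ * ‖trV (K ^ b)‖) := by gcongr; exact l2_opNorm_mul _ _
      _ ≤ _ := by gcongr <;> exact htrV _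
  rcases eq_or_ne ((Dv : ℝ) * Dh) 0 with h0 | h0
  · rw [h0, zero_pow two_ne_zero, _root_.inv_zero, zero_mul]
    positivity
  · rw [inv_mul_le_iff₀ (by positivity)]
    refine key.trans (le_of_eq ?_)
    field_simp [right_ne_zero_of_mul h0]
    ring

/-- the error bound (prodbd) of Appendix A: for a Hermitian `K` on
`ℂ^{Dv} ⊗ ℂ^{Dh}` with `D = Dv Dh`,
`(1/D²) |Tr((Tr_v K^a)(Tr_v K^b))| ≤ ‖K‖_∞^{a+b} / Dh`. -/
theorem trV_power_product_bound (Dv Dh : ℕ)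
    (K : Matrix (Fin Dv × Fin Dh) (Fin Dv × Fin Dh) ℂ) (hK : K.IsHermitian) (a b : ℕ) :
    (((Dv : ℝ) * (Dh : ℝ)) ^ 2)⁻¹ *
        ‖((trV (K ^ a)) * (trV (K ^ b))).trace‖ ≤
      opNorm K ^ (a + b) / Dh :=
  trV_power_product_bound_general Dv Dh K a b
end
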